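/- For every n ≥ 1, the generalized discrete Heisenberg group H_{2n+1} admits a positive cone with infinite conjugacy orbit: there exists a positive cone P of H_{2n+1} such that the set {g⁻¹Pg : g ∈ H_{2n+1}} of conjugates of P is infinite. -/

import Mathlib

/-! Order `H_{2n+1}` lexicographically: first by `a`, which is a homomorphism onto `ℤⁿ`, and
then, on its kernel `{a = 0}` (an abelian group on which `(c, b)` is an injective homomorphism
to `ℤ × ℤⁿ`), lexicographically by `(c, b)`. Conjugation by an element with `a = m eᵢ` fixes
the `a`- and `b`-coordinates of an element of `{a = 0}` and shifts its `c`-coordinate by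
`m bᵢ`; so the conjugates for different `m` cut the line `{a = 0, b = eᵢ}` at different
points. -/

open Matrix

/-- The defining pattern of a (generalized) Heisenberg matrix: block form
`(1 a c; 0 Iₙ bᵀ; 0 0 1)`, i.e. ones on the diagonal and zeros everywhere outside the
first row, the last column and the diagonal. -/
def IsHeisMat (n : ℕ) (M : Matrix (Fin (n + 2)) (Fin (n + 2)) ℤ) : Prop :=
  (∀ i, M i i = 1) ∧
  ∀ i j : Fin (n + 2), i ≠ j → i ≠ 0 → j ≠ Fin.last (n + 1) → M i j = 0

namespace IsHeisMat

variable {n : ℕ}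

lemma zero_ne_last : (0 : Fin (n + 2)) ≠ Fin.last (n + 1) := by
  simp [Fin.ext_iff]

lemma one (n : ℕ) : IsHeisMat n 1 := by
  constructor
  · intro i; simp
  · intro i j hij _ _; simp [Matrix.one_apply, hij]

lemma mul {M N : Matrix (Fin (n + 2)) (Fin (n + 2)) ℤ}
    (hM : IsHeisMat n M) (hN : IsHeisMat n N) : IsHeisMat n (M * N) := by
  constructor
  · intro i
    rw [Matrix.mul_apply, Finset.sum_eq_single i]
    · rw [hM.1, hN.1, one_mul]
    · intro l _ hl
      by_cases hi0 : i = 0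
      · subst hi0
        rw [hN.2 l 0 hl hl zero_ne_last, mul_zero]
      · by_cases hll : l = Fin.last (n + 1)
        · subst hll
          rw [hN.2 (Fin.last (n + 1)) i hl zero_ne_last.symm (Ne.symm hl), mul_zero]
        · rw [hM.2 i l (Ne.symm hl) hi0 hll, zero_mul]
    · intro hi; exact absurd (Finset.mem_univ i) hi
  · intro i j hij hi0 hjl
    rw [Matrix.mul_apply, Finset.sum_eq_zero]
    intro l _
    by_cases hll : l = Fin.last (n + 1)
    · subst hll
      rw [hN.2 (Fin.last (n + 1)) j (Ne.symm hjl) (Ne.symm zero_ne_last) hjl, mul_zero]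
    · by_cases hil : i = l
      · subst hil
        rw [hN.2 i j hij hi0 hjl, mul_zero]
      · rw [hM.2 i l hil hi0 hll, zero_mul]

end IsHeisMat

section InvAux

variable {n : ℕ} {X : Matrix (Fin (n + 2)) (Fin (n + 2)) ℤ}

lemma sq_supp (hx1 : ∀ i, X i i = 0)
    (hx2 : ∀ i j, i ≠ 0 → j ≠ Fin.last (n + 1) → X i j = 0) :
    ∀ i j, ¬(i = 0 ∧ j = Fin.last (n + 1)) → (X * X) i j = 0 := by
  intro i j hij
  rw [Matrix.mul_apply, Finset.sum_eq_zero]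
  intro l _
  by_cases hi0 : i = 0
  · have hjl : j ≠ Fin.last (n + 1) := fun h => hij ⟨hi0, h⟩
    by_cases hl0 : l = 0
    · subst hi0; subst hl0; rw [hx1 0, zero_mul]
    · rw [hx2 l j hl0 hjl, mul_zero]
  · by_cases hll : l = Fin.last (n + 1)
    · subst hll
      by_cases hjl : j = Fin.last (n + 1)
      · subst hjl; rw [hx1, mul_zero]
      · rw [hx2 _ j IsHeisMat.zero_ne_last.symm hjl, mul_zero]
    · rw [hx2 i l hi0 hll, zero_mul]

lemma cube_zero (hx1 : ∀ i, X i i = 0)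
    (hx2 : ∀ i j, i ≠ 0 → j ≠ Fin.last (n + 1) → X i j = 0) :
    X * X * X = 0 := by
  ext i j
  rw [Matrix.mul_apply, Matrix.zero_apply, Finset.sum_eq_zero]
  intro l _
  by_cases h : i = 0 ∧ l = Fin.last (n + 1)
  · obtain ⟨hi0, hll⟩ := h
    subst hll
    by_cases hjl : j = Fin.last (n + 1)
    · subst hjl; rw [hx1, mul_zero]
    · rw [hx2 _ j IsHeisMat.zero_ne_last.symm hjl, mul_zero]
  · rw [sq_supp hx1 hx2 i l h, zero_mul]

end InvAux

/-- The generalized discrete Heisenberg group `H_{2n+1}`, realized as the subgroup of the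
units of the ring of `(n+2) × (n+2)` integer matrices consisting of the matrices of block
form `(1 a c; 0 Iₙ bᵀ; 0 0 1)`. -/
def Heisenberg (n : ℕ) : Subgroup (Matrix (Fin (n + 2)) (Fin (n + 2)) ℤ)ˣ where
  carrier := {U | IsHeisMat n U.val}
  one_mem' := IsHeisMat.one n
  mul_mem' hA hB := IsHeisMat.mul hA hB
  inv_mem' := by
    intro U hU
    replace hU : IsHeisMat n U.val := hU
    set M : Matrix (Fin (n + 2)) (Fin (n + 2)) ℤ := U.val with hMdef
    set X : Matrix (Fin (n + 2)) (Fin (n + 2)) ℤ := M - 1 with hXdef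
    have hx1 : ∀ i, X i i = 0 := by
      intro i; simp [hXdef, Matrix.sub_apply, hU.1 i]
    have hx2 : ∀ i j, i ≠ 0 → j ≠ Fin.last (n + 1) → X i j = 0 := by
      intro i j hi0 hjl
      by_cases hij : i = j
      · subst hij; exact hx1 i
      · simp [hXdef, Matrix.sub_apply, hU.2 i j hij hi0 hjl, Matrix.one_apply_ne hij]
    have hM1 : M = 1 + X := by rw [hXdef]; abel
    have hcube : X * X * X = 0 := cube_zero hx1 hx2
    have hright : M * (1 - X + X * X) = 1 := by
      rw [hM1]
      have : (1 + X) * (1 - X + X * X) = 1 + X * X * X := by noncomm_ring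
      rw [this, hcube, add_zero]
    have hinv : (U⁻¹).val = 1 - X + X * X := Units.inv_eq_of_mul_eq_one_right hright
    show IsHeisMat n _
    rw [hinv]
    constructor
    · intro i
      have h2 : (X * X) i i = 0 :=
        sq_supp hx1 hx2 i i (by rintro ⟨h0, hl⟩; exact IsHeisMat.zero_ne_last (h0 ▸ hl))
      simp [Matrix.add_apply, Matrix.sub_apply, hx1 i, h2]
    · intro i j hij hi0 hjl
      have h2 : (X * X) i j = 0 := sq_supp hx1 hx2 i j (fun h => hi0 h.1)
      simp [Matrix.add_apply, Matrix.sub_apply, hx2 i j hi0 hjl, h2,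
        Matrix.one_apply_ne hij]

/-- A positive cone of a group `G`: a subsemigroup `P` such that `G` is the disjoint
union of `P`, `P⁻¹` and `{1}`. -/
def IsPositiveCone {G : Type*} [Group G] (P : Set G) : Prop :=
  (∀ a ∈ P, ∀ b ∈ P, a * b ∈ P) ∧
  (∀ g : G, g ∈ P ∨ g⁻¹ ∈ P ∨ g = 1) ∧
  (∀ g ∈ P, g⁻¹ ∉ P) ∧
  (1 : G) ∉ P

/-- The conjugate `g⁻¹ P g` of a subset `P` of a group. -/
def conjCone {G : Type*} [Group G] (g : G) (P : Set G) : Set G :=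
  (fun p => g⁻¹ * p * g) '' P

section PositiveCone

variable {G H : Type*} [Group G] [Group H]

theorem isPositiveCone_one_lt [LinearOrder H] [MulLeftStrictMono H] :
    IsPositiveCone {x : H | 1 < x} := by
  refine ⟨fun _ ha _ hb => Left.one_lt_mul ha hb, fun g => ?_, fun g hg hg' => ?_, lt_irrefl 1⟩
  · rcases lt_trichotomy g 1 with h | h | h
    · exact Or.inr (Or.inl (Left.one_lt_inv_iff.mpr h))
    · exact Or.inr (Or.inr h)
    · exact Or.inl h
  · exact lt_asymm hg (Left.one_lt_inv_iff.mp hg')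

theorem IsPositiveCone.preimage {P : Set H} (hP : IsPositiveCone P) {f : G →* H}
    (hf : Function.Injective f) : IsPositiveCone (f ⁻¹' P) := by
  obtain ⟨hmul, htri, hinv, hone⟩ := hP
  refine ⟨fun a ha b hb => ?_, fun g => ?_, fun g hg hg' => ?_, ?_⟩
  · simpa only [Set.mem_preimage, map_mul] using hmul _ ha _ hb
  · simpa only [Set.mem_preimage, map_inv, ← map_one f, hf.eq_iff] using htri (f g)
  · exact hinv _ hg (by simpa only [Set.mem_preimage, map_inv] using hg')
  · simpa only [Set.mem_preimage, map_one] using hone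

theorem IsPositiveCone.union_image_ker {P : Set H} (hP : IsPositiveCone P) (φ : G →* H)
    {Q : Set φ.ker} (hQ : IsPositiveCone Q) :
    IsPositiveCone (φ ⁻¹' P ∪ Subtype.val '' Q) := by
  obtain ⟨hmul, htri, hinv, hone⟩ := hP
  obtain ⟨hmulQ, htriQ, hinvQ, honeQ⟩ := hQ
  have hker : ∀ g ∈ Subtype.val '' Q, φ g = 1 := by
    rintro _ ⟨k, -, rfl⟩
    exact k.2
  refine ⟨?_, fun g => ?_, ?_, ?_⟩
  · rintro a (ha | ha) b (hb | hb)
    · exact Or.inl (by simpa only [Set.mem_preimage, map_mul] using hmul _ ha _ hb)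
    · exact Or.inl (by simpa only [Set.mem_preimage, map_mul, hker b hb, mul_one] using ha)
    · exact Or.inl (by simpa only [Set.mem_preimage, map_mul, hker a ha, one_mul] using hb)
    · obtain ⟨k, hk, rfl⟩ := ha
      obtain ⟨l, hl, rfl⟩ := hb
      exact Or.inr ⟨k * l, hmulQ k hk l hl, rfl⟩
  · rcases htri (φ g) with h | h | h
    · exact Or.inl (Or.inl h)
    · exact Or.inr (Or.inl (Or.inl (by rwa [Set.mem_preimage, map_inv])))
    · rcases htriQ ⟨g, h⟩ with hg | hg | hg
      · exact Or.inl (Or.inr ⟨_, hg, rfl⟩)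
      · exact Or.inr (Or.inl (Or.inr ⟨_, hg, rfl⟩))
      · exact Or.inr (Or.inr (congrArg Subtype.val hg))
  · rintro g (hg | hg) (hg' | hg')
    · exact hinv _ hg (by rwa [Set.mem_preimage, map_inv] at hg')
    · rw [Set.mem_preimage, ← inv_inv (φ g), ← map_inv, hker _ hg', inv_one] at hg
      exact hone hg
    · rw [Set.mem_preimage, map_inv, hker _ hg, inv_one] at hg'
      exact hone hg'
    · obtain ⟨k, hk, rfl⟩ := hg
      obtain ⟨l, hl, hlk⟩ := hg'
      exact hinvQ k hk (by rwa [show k⁻¹ = l from Subtype.ext hlk.symm])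
  · rintro (h | ⟨k, hk, hk1⟩)
    · exact hone (by rwa [Set.mem_preimage, map_one] at h)
    · exact honeQ (by rwa [show k = 1 from Subtype.ext hk1] at hk)

theorem mem_conjCone_iff {g h : G} {P : Set G} : h ∈ conjCone g P ↔ g * h * g⁻¹ ∈ P := by
  constructor
  · rintro ⟨p, hp, rfl⟩
    simpa only [mul_assoc, mul_inv_cancel_left, mul_inv_cancel, mul_one] using hp
  · intro hp
    exact ⟨g * h * g⁻¹, hp, by group⟩

end PositiveCone

namespace Heisenberg

variable {n : ℕ}

/-- The row and column index of `aᵢ` and `bᵢ`. -/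
def mid (i : Fin n) : Fin (n + 2) := i.castSucc.succ

lemma mid_ne_zero (i : Fin n) : mid i ≠ 0 := Fin.succ_ne_zero _

lemma mid_ne_last (i : Fin n) : mid i ≠ Fin.last (n + 1) := by
  simp [mid, Fin.ext_iff, i.isLt.ne]

lemma mid_injective : Function.Injective (mid (n := n)) := by
  intro i j h
  simpa [mid] using h

lemma eq_zero_or_eq_last_or_eq_mid (j : Fin (n + 2)) :
    j = 0 ∨ j = Fin.last (n + 1) ∨ ∃ i, j = mid i := by
  induction j using Fin.cases with
  | zero => exact Or.inl rfl
  | succ j =>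
    induction j using Fin.lastCases with
    | last => exact Or.inr (Or.inl rfl)
    | cast i => exact Or.inr (Or.inr ⟨i, rfl⟩)

lemma sum_fin_add_two {M : Type*} [AddCommMonoid M] (f : Fin (n + 2) → M) :
    ∑ j, f j = f 0 + ∑ i, f (mid i) + f (Fin.last (n + 1)) := by
  rw [Fin.sum_univ_succ, Fin.sum_univ_castSucc, ← add_assoc]
  rfl

end Heisenberg

namespace IsHeisMat

open Heisenberg (mid mid_ne_zero mid_ne_last mid_injective)

variable {n : ℕ} {M N : Matrix (Fin (n + 2)) (Fin (n + 2)) ℤ}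

lemma apply_zero (hM : IsHeisMat n M) {i : Fin (n + 2)} (hi : i ≠ 0) : M i 0 = 0 :=
  hM.2 i 0 hi hi zero_ne_last

lemma last_apply (hM : IsHeisMat n M) {j : Fin (n + 2)} (hj : j ≠ Fin.last (n + 1)) :
    M (Fin.last (n + 1)) j = 0 :=
  hM.2 _ j (Ne.symm hj) zero_ne_last.symm hj

lemma mid_apply_mid (hM : IsHeisMat n M) (k i : Fin n) :
    M (mid k) (mid i) = if k = i then 1 else 0 := by
  split_ifs with h
  · rw [h, hM.1]
  · exact hM.2 _ _ (mid_injective.ne h) (mid_ne_zero k) (mid_ne_last i)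

lemma mul_apply_zero_mid (hM : IsHeisMat n M) (hN : IsHeisMat n N) (i : Fin n) :
    (M * N) 0 (mid i) = M 0 (mid i) + N 0 (mid i) := by
  simp [Matrix.mul_apply, Heisenberg.sum_fin_add_two, hM.1, hN.mid_apply_mid,
    hN.last_apply (mid_ne_last i), add_comm]

lemma mul_apply_mid_last (hM : IsHeisMat n M) (hN : IsHeisMat n N) (i : Fin n) :
    (M * N) (mid i) (Fin.last (n + 1)) =
      M (mid i) (Fin.last (n + 1)) + N (mid i) (Fin.last (n + 1)) := by
  simp [Matrix.mul_apply, Heisenberg.sum_fin_add_two, hN.1, hM.mid_apply_mid,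
    hM.apply_zero (mid_ne_zero i), add_comm]

lemma mul_apply_zero_last (hM : IsHeisMat n M) (hN : IsHeisMat n N) :
    (M * N) 0 (Fin.last (n + 1)) = M 0 (Fin.last (n + 1)) + N 0 (Fin.last (n + 1)) +
      ∑ i, M 0 (mid i) * N (mid i) (Fin.last (n + 1)) := by
  rw [Matrix.mul_apply, Heisenberg.sum_fin_add_two, hM.1, hN.1]
  ring

lemma eq_one (hM : IsHeisMat n M) (ha : ∀ i, M 0 (mid i) = 0)
    (hb : ∀ i, M (mid i) (Fin.last (n + 1)) = 0) (hc : M 0 (Fin.last (n + 1)) = 0) : M = 1 := by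
  ext i j
  by_cases hij : i = j
  · rw [hij, hM.1, Matrix.one_apply_eq]
  rw [Matrix.one_apply_ne hij]
  rcases Heisenberg.eq_zero_or_eq_last_or_eq_mid i with rfl | rfl | ⟨i, rfl⟩ <;>
  rcases Heisenberg.eq_zero_or_eq_last_or_eq_mid j with rfl | rfl | ⟨j, rfl⟩
  all_goals first
    | exact absurd rfl hij
    | exact hc | exact ha _ | exact hb _
    | exact hM.apply_zero hij | exact hM.last_apply (Ne.symm hij)
    | exact hM.2 _ _ hij (mid_ne_zero _) (mid_ne_last _)

lemma isUnit (hM : IsHeisMat n M) : IsUnit M := by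
  have hX : IsNilpotent (M - 1) := by
    refine ⟨3, ?_⟩
    rw [pow_three, ← mul_assoc]
    refine cube_zero (fun i => by simp [hM.1]) fun i j hi hj => ?_
    by_cases hij : i = j
    · simp [hij, hM.1]
    · simp [hM.2 i j hij hi hj, Matrix.one_apply_ne hij]
  simpa using hX.isUnit_one_add

end IsHeisMat

namespace Heisenberg

variable {n : ℕ}

abbrev toMatrix (g : Heisenberg n) : Matrix (Fin (n + 2)) (Fin (n + 2)) ℤ :=
  (g : (Matrix (Fin (n + 2)) (Fin (n + 2)) ℤ)ˣ)

lemma isHeisMat (g : Heisenberg n) : IsHeisMat n (toMatrix g) :=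
  g.2

def aCoord (g : Heisenberg n) : Fin n → ℤ :=
  fun i => toMatrix g 0 (mid i)

def bCoord (g : Heisenberg n) : Fin n → ℤ :=
  fun i => toMatrix g (mid i) (Fin.last (n + 1))

def cCoord (g : Heisenberg n) : ℤ :=
  toMatrix g 0 (Fin.last (n + 1))

lemma aCoord_mul (g h : Heisenberg n) : aCoord (g * h) = aCoord g + aCoord h :=
  funext fun i => (isHeisMat g).mul_apply_zero_mid (isHeisMat h) i

lemma bCoord_mul (g h : Heisenberg n) : bCoord (g * h) = bCoord g + bCoord h :=
  funext fun i => (isHeisMat g).mul_apply_mid_last (isHeisMat h) i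

lemma cCoord_mul (g h : Heisenberg n) :
    cCoord (g * h) = cCoord g + cCoord h + ∑ i, aCoord g i * bCoord h i :=
  (isHeisMat g).mul_apply_zero_last (isHeisMat h)

lemma eq_one_of_coord (g : Heisenberg n) (ha : aCoord g = 0) (hb : bCoord g = 0)
    (hc : cCoord g = 0) : g = 1 :=
  Subtype.ext <| Units.ext <| (isHeisMat g).eq_one (congrFun ha) (congrFun hb) hc

lemma aCoord_one : aCoord (1 : Heisenberg n) = 0 :=
  funext fun i => Matrix.one_apply_ne (mid_ne_zero i).symm

lemma bCoord_one : bCoord (1 : Heisenberg n) = 0 :=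
  funext fun i => Matrix.one_apply_ne (mid_ne_last i)

lemma cCoord_one : cCoord (1 : Heisenberg n) = 0 :=
  Matrix.one_apply_ne IsHeisMat.zero_ne_last

lemma aCoord_inv (g : Heisenberg n) : aCoord g⁻¹ = -aCoord g := by
  have h := aCoord_mul g g⁻¹
  rw [mul_inv_cancel, aCoord_one] at h
  exact eq_neg_of_add_eq_zero_right h.symm

lemma bCoord_inv (g : Heisenberg n) : bCoord g⁻¹ = -bCoord g := by
  have h := bCoord_mul g g⁻¹
  rw [mul_inv_cancel, bCoord_one] at h
  exact eq_neg_of_add_eq_zero_right h.symm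

lemma aCoord_conj_of_aCoord_eq_zero (g : Heisenberg n) {h : Heisenberg n}
    (ha : aCoord h = 0) : aCoord (g * h * g⁻¹) = 0 := by
  rw [aCoord_mul, aCoord_mul, ha, aCoord_inv, add_zero, add_neg_cancel]

lemma bCoord_conj (g h : Heisenberg n) : bCoord (g * h * g⁻¹) = bCoord h := by
  rw [bCoord_mul, bCoord_mul, bCoord_inv, add_neg_cancel_comm]

lemma cCoord_conj_of_aCoord_eq_zero (g : Heisenberg n) {h : Heisenberg n}
    (ha : aCoord h = 0) :
    cCoord (g * h * g⁻¹) = cCoord h + ∑ i, aCoord g i * bCoord h i := by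
  have hinv := cCoord_mul g g⁻¹
  rw [mul_inv_cancel, cCoord_one] at hinv
  rw [cCoord_mul, cCoord_mul, aCoord_mul, ha, add_zero]
  linarith


def aHom : Heisenberg n →* Multiplicative (Lex (Fin n → ℤ)) :=
  MonoidHom.mk' (fun g => .ofAdd (toLex (aCoord g))) fun g h => by
    rw [aCoord_mul]
    rfl

lemma mem_ker_aHom {g : Heisenberg n} : g ∈ (aHom (n := n)).ker ↔ aCoord g = 0 :=
  MonoidHom.mem_ker.trans (Multiplicative.ofAdd.injective.eq_iff' rfl |>.trans toLex_inj)

def cbHom : (aHom (n := n)).ker →* Multiplicative (Lex (ℤ × Lex (Fin n → ℤ))) :=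
  MonoidHom.mk' (fun g => .ofAdd (toLex (cCoord g.1, toLex (bCoord g.1)))) fun g h => by
    rw [Subgroup.coe_mul, cCoord_mul, bCoord_mul, mem_ker_aHom.mp g.2]
    simp only [Pi.zero_apply, zero_mul, Finset.sum_const_zero, add_zero]
    rfl

lemma cbHom_injective : Function.Injective (cbHom (n := n)) := by
  refine (injective_iff_map_eq_one _).mpr fun g hg => ?_
  have h : cCoord g.1 = 0 ∧ bCoord g.1 = 0 := by
    simpa [cbHom] using hg
  exact Subtype.ext (eq_one_of_coord g.1 (mem_ker_aHom.mp g.2) h.2 h.1)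

def cone (n : ℕ) : Set (Heisenberg n) :=
  aHom ⁻¹' {x | 1 < x} ∪ Subtype.val '' (cbHom ⁻¹' {x | 1 < x})

theorem isPositiveCone_cone (n : ℕ) : IsPositiveCone (cone n) :=
  isPositiveCone_one_lt.union_image_ker aHom (isPositiveCone_one_lt.preimage cbHom_injective)

lemma mem_cone_iff_of_aCoord_eq_zero {g : Heisenberg n} (ha : aCoord g = 0) :
    g ∈ cone n ↔ 0 < toLex (cCoord g, toLex (bCoord g)) := by
  have hg : g ∈ (aHom (n := n)).ker := mem_ker_aHom.mpr ha
  have hnot : g ∉ aHom ⁻¹' {x | 1 < x} := by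
    rw [Set.mem_preimage, MonoidHom.mem_ker.mp hg]
    exact lt_irrefl (1 : Multiplicative (Lex (Fin n → ℤ)))
  rw [cone, Set.mem_union, or_iff_right hnot]
  constructor
  · rintro ⟨k, hk, rfl⟩
    exact hk
  · exact fun h => ⟨⟨g, hg⟩, h, rfl⟩


/-- The matrix `(1 a c; 0 Iₙ bᵀ; 0 0 1)`. -/
def coordMatrix (a b : Fin n → ℤ) (c : ℤ) : Matrix (Fin (n + 2)) (Fin (n + 2)) ℤ :=
  Matrix.of fun i j =>
    if i = 0 then (Fin.cons 1 (Fin.snoc a c : Fin (n + 1) → ℤ) : Fin (n + 2) → ℤ) j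
    else if j = Fin.last (n + 1) then
      (Fin.cons 0 (Fin.snoc b 1 : Fin (n + 1) → ℤ) : Fin (n + 2) → ℤ) i
    else (1 : Matrix (Fin (n + 2)) (Fin (n + 2)) ℤ) i j

lemma isHeisMat_coordMatrix (a b : Fin n → ℤ) (c : ℤ) : IsHeisMat n (coordMatrix a b c) := by
  refine ⟨fun i => ?_, fun i j hij hi hj => ?_⟩
  · rcases eq_zero_or_eq_last_or_eq_mid i with rfl | rfl | ⟨i, rfl⟩
    · simp [coordMatrix]
    · simp [coordMatrix, ← Fin.succ_last]
    · simp [coordMatrix, mid_ne_zero, mid_ne_last]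
  · simp [coordMatrix, hi, hj, Matrix.one_apply_ne hij]

noncomputable def ofCoord (a b : Fin n → ℤ) (c : ℤ) : Heisenberg n :=
  ⟨(isHeisMat_coordMatrix a b c).isUnit.unit, isHeisMat_coordMatrix a b c⟩

lemma toMatrix_ofCoord (a b : Fin n → ℤ) (c : ℤ) :
    toMatrix (ofCoord a b c) = coordMatrix a b c :=
  IsUnit.unit_spec _

lemma aCoord_ofCoord (a b : Fin n → ℤ) (c : ℤ) : aCoord (ofCoord a b c) = a := by
  funext i
  simp [aCoord, toMatrix_ofCoord, coordMatrix, mid]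

lemma bCoord_ofCoord (a b : Fin n → ℤ) (c : ℤ) : bCoord (ofCoord a b c) = b := by
  funext i
  simp [bCoord, toMatrix_ofCoord, coordMatrix, mid]

lemma cCoord_ofCoord (a b : Fin n → ℤ) (c : ℤ) : cCoord (ofCoord a b c) = c := by
  simp [cCoord, toMatrix_ofCoord, coordMatrix, ← Fin.succ_last]


lemma toLex_single_pos (i : Fin n) : (0 : Lex (Fin n → ℤ)) < toLex (Pi.single i 1) :=
  Pi.lt_toLex_update_self_iff (x := (0 : Fin n → ℤ)).mpr one_pos

lemma ofCoord_mem_conjCone_iff (i : Fin n) (k m : ℤ) :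
    ofCoord 0 (Pi.single i 1) k ∈ conjCone (ofCoord (Pi.single i m) 0 0) (cone n) ↔
      0 ≤ k + m := by
  set g := ofCoord (Pi.single i m) 0 0
  set t := ofCoord 0 (Pi.single i 1) k
  have ht : aCoord t = 0 := aCoord_ofCoord ..
  have hsum : ∑ j, aCoord g j * bCoord t j = m := by
    simp [g, t, aCoord_ofCoord, bCoord_ofCoord, Pi.single_apply]
  rw [mem_conjCone_iff, mem_cone_iff_of_aCoord_eq_zero (aCoord_conj_of_aCoord_eq_zero g ht),
    cCoord_conj_of_aCoord_eq_zero g ht, bCoord_conj, hsum, cCoord_ofCoord, bCoord_ofCoord,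
    ← toLex_zero, Prod.Lex.toLex_lt_toLex]
  simp only [Prod.fst_zero, Prod.snd_zero, toLex_single_pos, and_true, le_iff_lt_or_eq]

lemma injective_conjCone_ofCoord_single (i : Fin n) :
    Function.Injective fun m : ℤ => conjCone (ofCoord (Pi.single i m) 0 0) (cone n) := by
  intro m m' (h : conjCone _ _ = conjCone _ _)
  have h₁ := (ofCoord_mem_conjCone_iff i (-m) m').mp
    (h ▸ (ofCoord_mem_conjCone_iff i (-m) m).mpr (by omega))
  have h₂ := (ofCoord_mem_conjCone_iff i (-m') m).mp
    (h.symm ▸ (ofCoord_mem_conjCone_iff i (-m') m').mpr (by omega))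
  omega

end Heisenberg

/-- For every `n ≥ 1` the generalized discrete Heisenberg group `H_{2n+1}` has a positive
cone whose conjugacy orbit is infinite. -/
theorem heisenberg_cone_with_infinite_orbit (n : ℕ) (hn : 1 ≤ n) :
    ∃ P : Set ↥(Heisenberg n), IsPositiveCone P ∧
      {Q : Set ↥(Heisenberg n) | ∃ g : ↥(Heisenberg n), Q = conjCone g P}.Infinite :=
  ⟨Heisenberg.cone n, Heisenberg.isPositiveCone_cone n,
    Set.infinite_of_injective_forall_mem (Heisenberg.injective_conjCone_ofCoord_single ⟨0, hn⟩)
      fun _ => ⟨_, rfl⟩⟩
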